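/- arXiv:2402.07194 — 2 statements merged into one kernel-verified Lean document; each statement's English description precedes it below -/
import Mathlib

section
/- Let G and H be simple graphs, neither of which is complete, and suppose it is not the case that both G and H are a disjoint union of two cliques. Then the modular product G⋄H has diameter 2 if and only if there exist no vertices g,g' ∈ V(G) and h,h' ∈ V(H) satisfying either of the following conditions: (13) N_G[g]=N_G[g'], d_H(h,h') ≥ 3, and (g is universal in G, or {h,h'} is a γ_H-pair); (14) N_H[h]=N_H[h'], d_G(g,g') ≥ 3, and (h is universal in H, or {g,g'} is a γ_G-pair). -/
open SimpleGraph

/-- The closed neighborhood `N[v]` of a vertex. -/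
def closedNbr {α : Type*} (G : SimpleGraph α) (v : α) : Set α :=
  insert v (G.neighborSet v)

/-- The modular product `G ⋄ H`. -/
def modularProduct {α β : Type*} (G : SimpleGraph α) (H : SimpleGraph β) :
    SimpleGraph (α × β) :=
  SimpleGraph.fromRel (fun x y =>
    (x.1 = y.1 ∧ H.Adj x.2 y.2) ∨
    (G.Adj x.1 y.1 ∧ x.2 = y.2) ∨
    (G.Adj x.1 y.1 ∧ H.Adj x.2 y.2) ∨
    (x.1 ≠ y.1 ∧ x.2 ≠ y.2 ∧ ¬ G.Adj x.1 y.1 ∧ ¬ H.Adj x.2 y.2))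

/-- `{g, g'}` is a `γ_G`-pair: the closed neighborhoods are disjoint and cover `V(G)`. -/
def gammaPair {α : Type*} (G : SimpleGraph α) (g g' : α) : Prop :=
  closedNbr G g ∩ closedNbr G g' = ∅ ∧ closedNbr G g ∪ closedNbr G g' = Set.univ

/-- A universal vertex. -/
def IsUniversal {α : Type*} (G : SimpleGraph α) (v : α) : Prop :=
  closedNbr G v = Set.univ

/-- A complete graph: every two distinct vertices are adjacent. -/
def IsCompleteGraph {α : Type*} (G : SimpleGraph α) : Prop :=
  ∀ u v : α, u ≠ v → G.Adj u v

/-- `G` is a disjoint union of two cliques. -/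
def TwoCliques {α : Type*} (G : SimpleGraph α) : Prop :=
  ∃ A B : Set α, A.Nonempty ∧ B.Nonempty ∧ A ∪ B = Set.univ ∧ A ∩ B = ∅ ∧
    (∀ u ∈ A, ∀ v ∈ A, u ≠ v → G.Adj u v) ∧
    (∀ u ∈ B, ∀ v ∈ B, u ≠ v → G.Adj u v) ∧
    (∀ u ∈ A, ∀ v ∈ B, ¬ G.Adj u v)

/-- `u` and `v` are mutually maximally distant in `X`. -/
def MMD {α : Type*} (X : SimpleGraph α) (u v : α) : Prop :=
  (∀ w, X.Adj u w → X.edist w v ≤ X.edist u v) ∧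
  (∀ w, X.Adj v w → X.edist w u ≤ X.edist u v)

/-- A strong resolving set of `X`. -/
def IsStrongResolvingSet {α : Type*} (X : SimpleGraph α) (S : Set α) : Prop :=
  ∀ u v : α, u ≠ v → ∃ w ∈ S,
    X.dist u w = X.dist u v + X.dist v w ∨ X.dist v w = X.dist v u + X.dist u w

/-- The strong metric dimension of `X`. -/
noncomputable def sdim {α : Type*} (X : SimpleGraph α) : ℕ :=
  sInf {n | ∃ S : Set α, S.ncard = n ∧ IsStrongResolvingSet X S}

/-- The star `K_{1,n}`: the center is `none`, the leaves are `some i`. -/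
def starGraph (n : ℕ) : SimpleGraph (Option (Fin n)) :=
  SimpleGraph.fromRel (fun u v => u = none ∧ v ≠ none)

/-- The vertex cover number `β(X)`. -/
noncomputable def vertexCoverNumber {γ : Type*} (X : SimpleGraph γ) : ℕ :=
  sInf {n | ∃ C : Set γ, C.ncard = n ∧ ∀ u v, X.Adj u v → u ∈ C ∨ v ∈ C}


/-!
Two vertices of `G ⋄ H` are adjacent iff they are distinct and the first coordinates lie in each
other's closed neighbourhood exactly when the second coordinates do. Take `g' ∈ N[g]` and
`h' ∉ N[h]`. A common neighbour of `(g, h)` and `(g', h')` is `(g, b)` for a common neighbour `b`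
of `h, h'`, or `(a, h)` for `a ∈ N[g] \ N[g']` (symmetrically `(a, h')`). If neither kind exists,
`g, g'` are closed twins, `d(h, h') ≥ 3`, and the only candidates left are `(a, b)` with
`a ∉ N[g]` and `b ∉ N[h] ∪ N[h']`; these exist unless `g` is universal or `{h, h'}` is a
`γ`-pair, that is, unless (13) holds, and then the distance is `3`. Exchanging the factors covers
`h' ∈ N[h]`, and all other distinct pairs are adjacent.
-/

open SimpleGraph

namespace SimpleGraph

variable {V W : Type*} {G : SimpleGraph V} {G' : SimpleGraph W} {u v w : V}

lemma Hom.edist_map_le (f : G →g G') (u v : V) : G'.edist (f u) (f v) ≤ G.edist u v := by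
  by_cases huv : G.edist u v = ⊤
  · simp [huv]
  obtain ⟨p, hp⟩ := exists_walk_of_edist_ne_top huv
  calc G'.edist (f u) (f v) ≤ (p.map f).length := edist_le _
    _ = G.edist u v := by rw [Walk.length_map, hp]

lemma Iso.edist_map (e : G ≃g G') (u v : V) : G'.edist (e u) (e v) = G.edist u v := by
  refine le_antisymm (Hom.edist_map_le e.toHom u v) ?_
  simpa using Hom.edist_map_le e.symm.toHom (e u) (e v)

lemma two_le_edist (hne : u ≠ v) (hadj : ¬ G.Adj u v) : 2 ≤ G.edist u v := by
  have h : ¬ G.edist u v ≤ 1 := by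
    rw [edist_le_one_iff_adj_or_eq]
    tauto
  exact (ENat.add_one_le_iff (m := 1) (by decide)).mpr (not_le.mp h)

lemma edist_le_two_of_adj_of_adj (huw : G.Adj u w) (hwv : G.Adj w v) : G.edist u v ≤ 2 :=
  (Walk.cons huw (Walk.cons hwv Walk.nil)).edist_le

lemma three_le_edist_iff :
    3 ≤ G.edist u v ↔ u ≠ v ∧ ¬ G.Adj u v ∧ G.commonNeighbors u v = ∅ :=
  (ENat.add_one_le_iff (m := 2) (by decide)).trans two_lt_edist_iff

end SimpleGraph

section ClosedNbr

variable {V : Type*} {G : SimpleGraph V} {u v a : V}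

lemma mem_closedNbr : a ∈ closedNbr G u ↔ a = u ∨ G.Adj u a := Set.mem_insert_iff

lemma self_mem_closedNbr : u ∈ closedNbr G u := Set.mem_insert u _

lemma mem_closedNbr_comm : v ∈ closedNbr G u ↔ u ∈ closedNbr G v := by
  simp only [mem_closedNbr, G.adj_comm, eq_comm]

lemma ne_of_notMem_closedNbr (ha : a ∉ closedNbr G u) : a ≠ u :=
  fun hau => ha (hau ▸ self_mem_closedNbr)

lemma closedNbr_inter_eq_empty_of_three_le_edist (h : 3 ≤ G.edist u v) :
    closedNbr G u ∩ closedNbr G v = ∅ := by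
  obtain ⟨hne, hadj, hcommon⟩ := three_le_edist_iff.mp h
  refine Set.eq_empty_of_forall_notMem fun a ⟨hu, hv⟩ => ?_
  rcases mem_closedNbr.mp hu with rfl | hua <;> rcases mem_closedNbr.mp hv with rfl | hva
  · exact hne rfl
  · exact hadj hva.symm
  · exact hadj hua
  · exact (Set.eq_empty_iff_forall_notMem.mp hcommon a) ⟨hua, hva⟩

lemma notMem_closedNbr_of_three_le_edist (h : 3 ≤ G.edist u v) : v ∉ closedNbr G u :=
  fun hv => (Set.eq_empty_iff_forall_notMem.mp (closedNbr_inter_eq_empty_of_three_le_edist h) v)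
    ⟨hv, self_mem_closedNbr⟩

end ClosedNbr

section ModularProduct

variable {α β : Type*} {G : SimpleGraph α} {H : SimpleGraph β}

lemma modularProduct_adj {x y : α × β} :
    (modularProduct G H).Adj x y ↔ x ≠ y ∧ (y.1 ∈ closedNbr G x.1 ↔ y.2 ∈ closedNbr H x.2) := by
  obtain ⟨g, h⟩ := x
  obtain ⟨g', h'⟩ := y
  simp only [modularProduct, fromRel_adj, mem_closedNbr, ne_eq, Prod.mk.injEq, G.adj_comm g' g,
    H.adj_comm h' h, @eq_comm _ g' g, @eq_comm _ h' h]
  grind [SimpleGraph.irrefl]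

variable (G H) in
def modularProductComm : modularProduct G H ≃g modularProduct H G where
  toEquiv := Equiv.prodComm α β
  map_rel_iff' {x y} := by
    simp only [modularProduct_adj, Equiv.prodComm_apply, Prod.fst_swap, Prod.snd_swap, ne_eq,
      Prod.swap_inj, iff_comm (a := y.2 ∈ _)]

lemma edist_modularProduct_swap (g g' : α) (h h' : β) :
    (modularProduct H G).edist (h, g) (h', g') = (modularProduct G H).edist (g, h) (g', h') :=
  (modularProductComm G H).edist_map (g, h) (g', h')

lemma modularProduct_adj_adj_of_mem_commonNeighbors {g g' : α} {h h' b : β}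
    (hg : g' ∈ closedNbr G g) (hb : b ∈ H.commonNeighbors h h') :
    (modularProduct G H).Adj (g, h) (g, b) ∧ (modularProduct G H).Adj (g, b) (g', h') := by
  obtain ⟨hhb, hh'b⟩ := H.mem_commonNeighbors.mp hb
  exact ⟨modularProduct_adj.mpr ⟨by simp [hhb.ne],
      iff_of_true self_mem_closedNbr (mem_closedNbr.mpr (Or.inr hhb))⟩,
    (modularProduct_adj.mpr ⟨by simp [hh'b.ne],
      iff_of_true (mem_closedNbr_comm.mp hg) (mem_closedNbr.mpr (Or.inr hh'b))⟩).symm⟩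

lemma modularProduct_adj_adj_of_mem_of_notMem {g g' a : α} {h h' : β} (hg : g ∈ closedNbr G g')
    (hfar : 3 ≤ H.edist h h') (ha : a ∈ closedNbr G g) (ha' : a ∉ closedNbr G g') :
    (modularProduct G H).Adj (g, h) (a, h) ∧ (modularProduct G H).Adj (a, h) (g', h') := by
  have hh : h ∉ closedNbr H h' :=
    mem_closedNbr_comm.not.mp (notMem_closedNbr_of_three_le_edist hfar)
  have hag : g ≠ a := fun hga => ha' (hga ▸ hg)
  exact ⟨modularProduct_adj.mpr ⟨by simp [hag], iff_of_true ha self_mem_closedNbr⟩,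
    (modularProduct_adj.mpr ⟨by simp [(ne_of_notMem_closedNbr ha').symm],
      iff_of_false ha' hh⟩).symm⟩

lemma exists_modularProduct_common_nbr_of_closedNbr_ne {g g' : α} {h h' : β}
    (hg : g' ∈ closedNbr G g) (hfar : 3 ≤ H.edist h h') (hne : closedNbr G g ≠ closedNbr G g') :
    ∃ x, (modularProduct G H).Adj (g, h) x ∧ (modularProduct G H).Adj x (g', h') := by
  obtain ⟨a, ha⟩ := Set.symmDiff_nonempty.mpr hne
  rcases ha with ⟨ha, ha'⟩ | ⟨ha', ha⟩
  · exact ⟨(a, h), modularProduct_adj_adj_of_mem_of_notMem (mem_closedNbr_comm.mp hg) hfar ha ha'⟩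
  · obtain ⟨h1, h2⟩ := modularProduct_adj_adj_of_mem_of_notMem hg (H.edist_comm ▸ hfar) ha' ha
    exact ⟨(a, h'), h2.symm, h1.symm⟩

lemma exists_modularProduct_common_nbr_of_closedNbr_eq {g g' : α} {h h' : β}
    (htwin : closedNbr G g = closedNbr G g') (hfar : 3 ≤ H.edist h h')
    (hnu : ¬ _root_.IsUniversal G g) (hnγ : ¬ gammaPair H h h') :
    ∃ x, (modularProduct G H).Adj (g, h) x ∧ (modularProduct G H).Adj x (g', h') := by
  obtain ⟨a, ha⟩ := (Set.ne_univ_iff_exists_notMem _).mp hnu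
  obtain ⟨b, hb⟩ := (Set.ne_univ_iff_exists_notMem _).mp
    fun hcover => hnγ ⟨closedNbr_inter_eq_empty_of_three_le_edist hfar, hcover⟩
  rw [Set.mem_union, not_or] at hb
  have ha' : a ∉ closedNbr G g' := htwin ▸ ha
  exact ⟨(a, b),
    modularProduct_adj.mpr ⟨by simp [(ne_of_notMem_closedNbr ha).symm], iff_of_false ha hb.1⟩,
    (modularProduct_adj.mpr ⟨by simp [(ne_of_notMem_closedNbr ha').symm],
      iff_of_false ha' hb.2⟩).symm⟩

variable (G H) in
/-- Condition (13) of the paper; condition (14) is `IsFarTwinPair H G h h' g g'`. -/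
def IsFarTwinPair (g g' : α) (h h' : β) : Prop :=
  closedNbr G g = closedNbr G g' ∧ 3 ≤ H.edist h h' ∧ (_root_.IsUniversal G g ∨ gammaPair H h h')

lemma IsFarTwinPair.three_le_edist {g g' : α} {h h' : β} (hp : IsFarTwinPair G H g g' h h') :
    3 ≤ (modularProduct G H).edist (g, h) (g', h') := by
  obtain ⟨htwin, hfar, hug⟩ := hp
  have hdisj := closedNbr_inter_eq_empty_of_three_le_edist hfar
  have hh' := notMem_closedNbr_of_three_le_edist hfar
  refine three_le_edist_iff.mpr
    ⟨ne_of_apply_ne Prod.snd (ne_of_notMem_closedNbr hh').symm, ?_, ?_⟩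
  · rw [modularProduct_adj]
    exact fun ⟨_, hiff⟩ => hh' (hiff.mp (htwin ▸ self_mem_closedNbr))
  · refine Set.eq_empty_of_forall_notMem fun ⟨a, b⟩ ⟨had, had'⟩ => ?_
    have hiff := (modularProduct_adj.mp had).2
    have hiff' := (modularProduct_adj.mp had').2
    simp only [← htwin] at hiff hiff'
    have hb : b ∉ closedNbr H h := fun hb =>
      (Set.eq_empty_iff_forall_notMem.mp hdisj b) ⟨hb, hiff'.mp (hiff.mpr hb)⟩
    have hb' : b ∉ closedNbr H h' := fun hb' => hb (hiff.mp (hiff'.mpr hb'))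
    rcases hug with huniv | ⟨-, hcover⟩
    · exact hb (hiff.mp (huniv ▸ Set.mem_univ a))
    · exact (hcover ▸ Set.mem_univ b : b ∈ closedNbr H h ∪ closedNbr H h').elim hb hb'

lemma edist_modularProduct_le_two {g g' : α} {h h' : β} (hg : g' ∈ closedNbr G g)
    (hp : ¬ IsFarTwinPair G H g g' h h') :
    (modularProduct G H).edist (g, h) (g', h') ≤ 2 := by
  by_cases hh : h' ∈ closedNbr H h
  · refine le_trans ?_ one_le_two
    rw [edist_le_one_iff_adj_or_eq, modularProduct_adj]
    tauto
  suffices ∃ x, (modularProduct G H).Adj (g, h) x ∧ (modularProduct G H).Adj x (g', h') by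
    obtain ⟨x, h1, h2⟩ := this
    exact edist_le_two_of_adj_of_adj h1 h2
  by_cases hfar : 3 ≤ H.edist h h'
  · by_cases htwin : closedNbr G g = closedNbr G g'
    · obtain ⟨hnu, hnγ⟩ := not_or.mp fun hc => hp ⟨htwin, hfar, hc⟩
      exact exists_modularProduct_common_nbr_of_closedNbr_eq htwin hfar hnu hnγ
    · exact exists_modularProduct_common_nbr_of_closedNbr_ne hg hfar htwin
  · obtain ⟨b, hb⟩ : (H.commonNeighbors h h').Nonempty := by
      rw [Set.nonempty_iff_ne_empty]
      exact fun hcommon => hfar (three_le_edist_iff.mpr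
        ⟨ne_of_notMem_closedNbr hh |>.symm, fun hadj => hh (Or.inr hadj), hcommon⟩)
    exact ⟨(g, b), modularProduct_adj_adj_of_mem_commonNeighbors hg hb⟩

lemma ediam_modularProduct_le_two_iff :
    (modularProduct G H).ediam ≤ 2 ↔
      ¬ ∃ (g g' : α) (h h' : β), IsFarTwinPair G H g g' h h' ∨ IsFarTwinPair H G h h' g g' := by
  constructor
  · rintro hdiam ⟨g, g', h, h', hp | hp⟩
    · exact absurd (hp.three_le_edist.trans (edist_le_ediam.trans hdiam)) (by decide)
    · have h3 := hp.three_le_edist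
      rw [edist_modularProduct_swap] at h3
      exact absurd (h3.trans (edist_le_ediam.trans hdiam)) (by decide)
  · intro hno
    simp only [not_exists, not_or] at hno
    refine ediam_le_iff.mpr fun ⟨g, h⟩ ⟨g', h'⟩ => ?_
    by_cases hg : g' ∈ closedNbr G g
    · exact edist_modularProduct_le_two hg (hno g g' h h').1
    by_cases hh : h' ∈ closedNbr H h
    · rw [← edist_modularProduct_swap]
      exact edist_modularProduct_le_two hh (hno g g' h h').2
    · have hadj : (modularProduct G H).Adj (g, h) (g', h') :=
        modularProduct_adj.mpr ⟨by simp [(ne_of_notMem_closedNbr hg).symm], iff_of_false hg hh⟩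
      exact (edist_eq_one_iff_adj.mpr hadj).trans_le one_le_two

lemma two_le_ediam_modularProduct [Nonempty β] (hG : ¬ IsCompleteGraph G) :
    2 ≤ (modularProduct G H).ediam := by
  obtain ⟨u, v, hne, hadj⟩ : ∃ u v, u ≠ v ∧ ¬ G.Adj u v := by simpa [IsCompleteGraph] using hG
  obtain ⟨h⟩ := ‹Nonempty β›
  have hv : v ∉ closedNbr G u := by simp [mem_closedNbr, hne.symm, hadj]
  refine (two_le_edist (u := (u, h)) (v := (v, h)) (by simp [hne]) ?_).trans edist_le_ediam
  rw [modularProduct_adj]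
  exact fun ⟨_, hiff⟩ => hv (hiff.mpr self_mem_closedNbr)

end ModularProduct

theorem modularProduct_diam_eq_two_general {α β : Type*} (G : SimpleGraph α) (H : SimpleGraph β)
    (hG : ¬ IsCompleteGraph G) (hH : ¬ IsCompleteGraph H) :
    (modularProduct G H).ediam = 2 ↔
      ¬ ∃ (g g' : α) (h h' : β),
        ((closedNbr G g = closedNbr G g' ∧ 3 ≤ H.edist h h' ∧
        (_root_.IsUniversal G g ∨ gammaPair H h h')) ∨
         (closedNbr H h = closedNbr H h' ∧ 3 ≤ G.edist g g' ∧
        (_root_.IsUniversal H h ∨ gammaPair G g g'))) := by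
  obtain ⟨h₀, -⟩ := not_forall.mp hH
  have : Nonempty β := ⟨h₀⟩
  refine ⟨fun hdiam => ediam_modularProduct_le_two_iff.mp hdiam.le, fun hno => ?_⟩
  exact le_antisymm (ediam_modularProduct_le_two_iff.mpr hno) (two_le_ediam_modularProduct hG)

/-- characterization of the modular products of diameter two. -/
theorem modularProduct_diam_eq_two {α β : Type*} (G : SimpleGraph α) (H : SimpleGraph β)
    (hG : ¬ IsCompleteGraph G) (hH : ¬ IsCompleteGraph H)
    (hGH : ¬ (TwoCliques G ∧ TwoCliques H)) :
    (modularProduct G H).ediam = 2 ↔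
      ¬ ∃ (g g' : α) (h h' : β),
        ((closedNbr G g = closedNbr G g' ∧ 3 ≤ H.edist h h' ∧
        (_root_.IsUniversal G g ∨ gammaPair H h h')) ∨
         (closedNbr H h = closedNbr H h' ∧ 3 ≤ G.edist g g' ∧
        (_root_.IsUniversal H h ∨ gammaPair G g g'))) :=
  modularProduct_diam_eq_two_general G H hG hH
end

section
/- Let G and H be simple graphs such that the modular product G⋄H is connected and has diameter two. Then distinct vertices (g,h) and (g',h') of G⋄H are mutually maximally distant in G⋄H if and only if (g,h) and (g',h') are twins of G⋄H, or one of the following holds: g=g', h≠h' and hh'∉E(H); h=h', g≠g' and gg'∉E(G); gg'∈E(G), h≠h' and hh'∉E(H); g≠g', gg'∉E(G) and hh'∈E(H). (Equivalently, E((G⋄H)_SR) = TW(G⋄H) ∪ E(Ḡ□H̄) ∪ E(G×H̄) ∪ E(Ḡ×H).) -/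
open SimpleGraph

lemma modAdj {α β : Type*} (G : SimpleGraph α) (H : SimpleGraph β) (x y : α × β) :
    (modularProduct G H).Adj x y ↔ x ≠ y ∧
      ((x.1 = y.1 ∧ H.Adj x.2 y.2) ∨
       (G.Adj x.1 y.1 ∧ x.2 = y.2) ∨
       (G.Adj x.1 y.1 ∧ H.Adj x.2 y.2) ∨
       (x.1 ≠ y.1 ∧ x.2 ≠ y.2 ∧ ¬ G.Adj x.1 y.1 ∧ ¬ H.Adj x.2 y.2)) := by
  simp only [modularProduct, fromRel_adj]
  constructor
  · rintro ⟨hne, h | h⟩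
    · exact ⟨hne, h⟩
    · refine ⟨hne, ?_⟩
      rcases h with ⟨h1, h2⟩ | ⟨h1, h2⟩ | ⟨h1, h2⟩ | ⟨h1, h2, h3, h4⟩
      · exact Or.inl ⟨h1.symm, h2.symm⟩
      · exact Or.inr (Or.inl ⟨h1.symm, h2.symm⟩)
      · exact Or.inr (Or.inr (Or.inl ⟨h1.symm, h2.symm⟩))
      · exact Or.inr (Or.inr (Or.inr ⟨h1.symm, h2.symm, fun a => h3 a.symm, fun a => h4 a.symm⟩))
  · rintro ⟨hne, h⟩
    exact ⟨hne, Or.inl h⟩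

lemma mem_closedNbr_s8 {α : Type*} (G : SimpleGraph α) (v w : α) :
    w ∈ closedNbr G v ↔ w = v ∨ G.Adj v w := by
  simp [closedNbr, mem_neighborSet]

/-- the edges of the strong resolving graph of a modular product of
diameter two. -/
theorem mmd_modularProduct_diam_two {α β : Type*} (G : SimpleGraph α) (H : SimpleGraph β)
    (hc : (modularProduct G H).Connected) (hd : (modularProduct G H).ediam = 2)
    (g g' : α) (h h' : β) (hne : (g, h) ≠ (g', h')) :
    MMD (modularProduct G H) (g, h) (g', h') ↔
      (closedNbr (modularProduct G H) (g, h) = closedNbr (modularProduct G H) (g', h')) ∨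
      (g = g' ∧ h ≠ h' ∧ ¬ H.Adj h h') ∨
      (h = h' ∧ g ≠ g' ∧ ¬ G.Adj g g') ∨
      (G.Adj g g' ∧ h ≠ h' ∧ ¬ H.Adj h h') ∨
      (g ≠ g' ∧ ¬ G.Adj g g' ∧ H.Adj h h') := by
  set X := modularProduct G H with hX
  have hle : ∀ a b : α × β, X.edist a b ≤ 2 := fun a b => hd ▸ X.edist_le_ediam
  by_cases hadj : X.Adj (g, h) (g', h')
  · -- adjacent case: MMD ↔ twins, and the other disjuncts are false
    have hd1 : X.edist (g, h) (g', h') = 1 := edist_eq_one_iff_adj.mpr hadj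
    have key : MMD X (g, h) (g', h') ↔
        closedNbr X (g, h) = closedNbr X (g', h') := by
      constructor
      · rintro ⟨m1, m2⟩
        ext w
        rw [mem_closedNbr_s8, mem_closedNbr_s8]
        constructor
        · rintro (rfl | hw)
          · exact Or.inr hadj.symm
          · by_cases hwv : w = (g', h')
            · exact Or.inl hwv
            · have h1 := (m1 w hw).trans_eq hd1
              have h0 : X.edist w (g', h') ≠ 0 := by
                exact edist_eq_zero_iff.ne.mpr hwv
              have : X.edist w (g', h') = 1 :=
                le_antisymm h1 (ENat.one_le_iff_ne_zero.mpr h0)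
              exact Or.inr (edist_eq_one_iff_adj.mp this).symm
        · rintro (rfl | hw)
          · exact Or.inr hadj
          · by_cases hwv : w = (g, h)
            · exact Or.inl hwv
            · have h1 := (m2 w hw).trans_eq hd1
              have h0 : X.edist w (g, h) ≠ 0 := by
                exact edist_eq_zero_iff.ne.mpr hwv
              have : X.edist w (g, h) = 1 :=
                le_antisymm h1 (ENat.one_le_iff_ne_zero.mpr h0)
              exact Or.inr (edist_eq_one_iff_adj.mp this).symm
      · intro heq
        constructor
        · intro w hw
          have : w ∈ closedNbr X (g', h') := by
            rw [← heq, mem_closedNbr_s8]; exact Or.inr hw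
          rw [mem_closedNbr_s8] at this
          rcases this with rfl | hw'
          · simp
          · rw [hd1, X.edist_comm]
            exact le_of_eq (edist_eq_one_iff_adj.mpr hw')
        · intro w hw
          have : w ∈ closedNbr X (g, h) := by
            rw [heq, mem_closedNbr_s8]; exact Or.inr hw
          rw [mem_closedNbr_s8] at this
          rcases this with rfl | hw'
          · simp
          · rw [hd1, X.edist_comm]
            exact le_of_eq (edist_eq_one_iff_adj.mpr hw')
    rw [key]
    constructor
    · exact Or.inl
    · rintro (h1 | h1 | h1 | h1 | h1)
      · exact h1
      all_goals {
        exfalso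
        rw [modAdj] at hadj
        obtain ⟨-, hD⟩ := hadj
        rcases hD with ⟨e1, e2⟩ | ⟨e1, e2⟩ | ⟨e1, e2⟩ | ⟨e1, e2, e3, e4⟩ <;>
          first
            | exact h1.2.2 e2
            | exact h1.2.2 e1
            | exact h1.2.1 e1
            | exact h1.2.1 e2
            | exact e1 h1.1
            | exact e2 h1.1
            | exact e3 h1.1
            | exact e4 h1.2.2
            | (subst e1; exact G.irrefl e2)
            | (subst e1; exact G.irrefl e1)
            | (subst e2; exact H.irrefl e1)
            | (subst e2; exact H.irrefl e2)
            | (subst h1; exact G.irrefl e1)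
            | simp_all }
  · -- nonadjacent case: both sides hold
    have hd2 : X.edist (g, h) (g', h') = 2 := by
      have h0 : X.edist (g, h) (g', h') ≠ 0 := edist_eq_zero_iff.ne.mpr hne
      have h1 : X.edist (g, h) (g', h') ≠ 1 := fun hh => hadj (edist_eq_one_iff_adj.mp hh)
      have h2 := hle (g, h) (g', h')
      generalize hdd : X.edist (g, h) (g', h') = d at *
      cases d with
      | top => exact absurd h2 (by simp)
      | coe n =>
        have : n ≤ 2 := by exact_mod_cast h2
        have hn0 : n ≠ 0 := fun hh => h0 (by simp [hh])
        have hn1 : n ≠ 1 := fun hh => h1 (by simp [hh])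
        have : n = 2 := by omega
        simp [this]
    constructor
    · intro _
      rw [modAdj] at hadj
      push_neg at hadj
      obtain ⟨d1, d2, d3, d4⟩ := hadj hne
      simp only [] at d1 d2 d3 d4
      by_cases hg : g = g'
      · subst hg
        have hhne : h ≠ h' := fun hh => hne (by simp [hh])
        exact Or.inr (Or.inl ⟨rfl, hhne, d1 rfl⟩)
      · by_cases hh : h = h'
        · subst hh
          exact Or.inr (Or.inr (Or.inl ⟨rfl, hg, fun hG => d2 hG rfl⟩))
        · by_cases hG : G.Adj g g'
          · exact Or.inr (Or.inr (Or.inr (Or.inl ⟨hG, hh, d3 hG⟩)))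
          · by_cases hH : H.Adj h h'
            · exact Or.inr (Or.inr (Or.inr (Or.inr ⟨hg, hG, hH⟩)))
            · exact absurd (d4 hg hh hG) hH
    · intro _
      constructor
      · intro w _
        rw [hd2, X.edist_comm]; exact hle _ _
      · intro w _
        rw [hd2, X.edist_comm]; exact hle _ _
end
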